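/- For the conformal inversion X_i = x_jx^j∂_i - 2x_ix^j∂_j, the difference between the adjoint action 𝓛^{λ,μ}_{X_i} on differential operators (pulled back by normal ordering) and the symbol action L^δ_{X_i} equals -p_i T + 2(E + nλ)∂_{p^i}, where T = η_{ij}∂_{p_i}∂_{p_j}, E = p_i∂_{p_i}, ∂_{p^i} = η_{ij}∂_{p_j}, and δ = μ - λ. -/

import Mathlib

open MvPolynomial

noncomputable section

/-- Polynomial symbols: polynomial functions on `T*ℝⁿ`; `Sum.inl` are the `x` variables,
`Sum.inr` the fiber variables `p`. -/
abbrev PolySym (n : ℕ) := MvPolynomial (Fin n ⊕ Fin n) ℝ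

/-- Polynomial functions on `ℝⁿ` (densities are identified with these). -/
abbrev PolyDen (n : ℕ) := MvPolynomial (Fin n) ℝ

/-- Polynomial vector fields on `ℝⁿ`, given by their components. -/
abbrev PolyVF (n : ℕ) := Fin n → PolyDen n

/-- `∂/∂x^i` on symbols. -/
def dxOp (n : ℕ) (i : Fin n) : Module.End ℝ (PolySym n) := (pderiv (Sum.inl i)).toLinearMap

/-- `∂/∂p_i` on symbols. -/
def dpOp (n : ℕ) (i : Fin n) : Module.End ℝ (PolySym n) := (pderiv (Sum.inr i)).toLinearMap

/-- Multiplication by a symbol. -/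
def mulOp (n : ℕ) (q : PolySym n) : Module.End ℝ (PolySym n) := LinearMap.mulLeft ℝ q

/-- The symbol `x^i`. -/
def xVar (n : ℕ) (i : Fin n) : PolySym n := X (Sum.inl i)

/-- The symbol `p_i`. -/
def pVar (n : ℕ) (i : Fin n) : PolySym n := X (Sum.inr i)

/-- A polynomial in `x` viewed as a symbol. -/
def liftX (n : ℕ) (f : PolyDen n) : PolySym n := rename Sum.inl f

/-- Divergence of a vector field. -/
def divVF (n : ℕ) (Xf : PolyVF n) : PolyDen n := ∑ i, pderiv i (Xf i)

/-- Weight function computing the degree in the `p` variables. -/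
def pwt (n : ℕ) : Fin n ⊕ Fin n → ℕ := Sum.elim (fun _ => 0) (fun _ => 1)

/-- Homogeneity of degree `k` in the fiber variables `p`. -/
def IsPHomog (n : ℕ) (P : PolySym n) (k : ℕ) : Prop := IsWeightedHomogeneous (pwt n) P k

/-- The weight-`δ` action `L^δ_X = X^i ∂_{x^i} - p_j (∂_{x^i} X^j) ∂_{p_i} + δ Div(X)` of a
vector field on symbols. -/
def Lop (n : ℕ) (δ : ℝ) (Xf : PolyVF n) : Module.End ℝ (PolySym n) :=
  (∑ i, mulOp n (liftX n (Xf i)) ∘ₗ dxOp n i)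
    - (∑ i, ∑ j, mulOp n (pVar n j * liftX n (pderiv i (Xf j))) ∘ₗ dpOp n i)
    + δ • mulOp n (liftX n (divVF n Xf))

/-- The action `ℓ^λ_X = X + λ Div(X)` of a vector field on `λ`-densities. -/
def ellOp (n : ℕ) (lam : ℝ) (Xf : PolyVF n) : Module.End ℝ (PolyDen n) :=
  (∑ i, LinearMap.mulLeft ℝ (Xf i) ∘ₗ (pderiv i).toLinearMap)
    + lam • LinearMap.mulLeft ℝ (divVF n Xf)

/-- Lie bracket of polynomial vector fields. -/
def bracketVF (n : ℕ) (Xf Yf : PolyVF n) : PolyVF n :=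
  fun i => ∑ j, (Xf j * pderiv j (Yf i) - Yf j * pderiv j (Xf i))
/-- The trace operator `T = η_{ij} ∂_{p_i} ∂_{p_j}` for the diagonal metric with entries `ε`. -/
def traceOp (n : ℕ) (ε : Fin n → ℝ) : Module.End ℝ (PolySym n) :=
  ∑ i, ε i • (dpOp n i ∘ₗ dpOp n i)

/-- The Euler operator `E = p_i ∂_{p_i}`. -/
def eulerOp (n : ℕ) : Module.End ℝ (PolySym n) := ∑ i, mulOp n (pVar n i) ∘ₗ dpOp n i

/-- The quadratic symbol `R = η^{ij} p_i p_j` (the metric). -/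
def rQuad (n : ℕ) (ε : Fin n → ℝ) : PolySym n := ∑ i, ε i • (pVar n i * pVar n i)

/-- Multiplication by the metric symbol `R`. -/
def rOp (n : ℕ) (ε : Fin n → ℝ) : Module.End ℝ (PolySym n) := mulOp n (rQuad n ε)

/-- The divergence operator `D = ∂_{x^i} ∂_{p_i}` on symbols. -/
def divOp (n : ℕ) : Module.End ℝ (PolySym n) := ∑ i, dxOp n i ∘ₗ dpOp n i

/-- The gradient operator `G = η^{ij} p_i ∂_{x^j}`. -/
def gradOp (n : ℕ) (ε : Fin n → ℝ) : Module.End ℝ (PolySym n) :=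
  ∑ i, ε i • (mulOp n (pVar n i) ∘ₗ dxOp n i)

/-- The translation vector field `∂_i`. -/
def transVF (n : ℕ) (i : Fin n) : PolyVF n := fun j => if j = i then 1 else 0

/-- The dilation vector field `x^i ∂_i`. -/
def dilVF (n : ℕ) : PolyVF n := fun j => X j

/-- The rotation vector field `x_j ∂_i - x_i ∂_j` for the diagonal metric `ε`. -/
def rotVF (n : ℕ) (ε : Fin n → ℝ) (i j : Fin n) : PolyVF n :=
  fun m => (if m = i then ε j • X j else 0) - (if m = j then ε i • X i else 0)

/-- The conformal inversion `X_i = x_j x^j ∂_i - 2 x_i x^j ∂_j`. -/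
def invVF (n : ℕ) (ε : Fin n → ℝ) (i : Fin n) : PolyVF n :=
  fun j => (if j = i then ∑ m, ε m • (X m * X m) else 0) - (2 * ε i) • (X i * X j)

/-- Generators of the conformal Lie algebra: translations, rotations, the dilation and the
conformal inversions. -/
def confGenSet (n : ℕ) (ε : Fin n → ℝ) : Set (PolyVF n) :=
  Set.range (transVF n) ∪ {Xf | ∃ i j, Xf = rotVF n ε i j} ∪ {dilVF n} ∪
    Set.range (invVF n ε)
/-- Exponents of the `x`-part of a symbol monomial. -/
def xExp (n : ℕ) (m : (Fin n ⊕ Fin n) →₀ ℕ) : Fin n →₀ ℕ :=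
  Finsupp.comapDomain Sum.inl m Sum.inl_injective.injOn

/-- Exponents of the `p`-part of a symbol monomial. -/
def pExp (n : ℕ) (m : (Fin n ⊕ Fin n) →₀ ℕ) : Fin n →₀ ℕ :=
  Finsupp.comapDomain Sum.inr m Sum.inr_injective.injOn

/-- The iterated partial derivative `∂^b f` of a polynomial on `ℝⁿ`. -/
def derivMulti (n : ℕ) (b : Fin n →₀ ℕ) (f : PolyDen n) : PolyDen n :=
  ∑ c ∈ f.support, (f.coeff c * ∏ i, (Nat.descFactorial (c i) (b i) : ℝ)) • monomial (c - b) 1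

/-- Normal ordering: the differential operator associated to a symbol, sending the monomial
`x^a p^b` to the operator `x^a ∂^b`. -/
def Nord (n : ℕ) (P : PolySym n) (f : PolyDen n) : PolyDen n :=
  ∑ m ∈ P.support, P.coeff m • (monomial (xExp n m) 1 * derivMulti n (pExp n m) f)

/-!
Normal ordering satisfies `N(x_j P) = x_j ∘ N(P)` and `N(p_j P) = N(P) ∘ ∂_j`. By induction on `P`
these give the commutation rules `[∂_j, N(P)] = N(∂_{x^j} P)` and, for a function `g` whose third
derivatives vanish, the exact Leibniz rule
`N(P) ∘ g = g N(P) + ∂_a g N(∂_{p_a} P) + ½ ∂_a ∂_b g N(∂_{p_a} ∂_{p_b} P)`.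
For a vector field `X` with quadratic components they yield
`𝓛^{λ,λ+δ}_X - L^δ_X = -½ p_k ∂_a ∂_b X^k ∂_{p_a} ∂_{p_b} - λ ∂_a (Div X) ∂_{p_a}`.
For the inversion `X_i`, `∂_a ∂_b X_i^k = 2 (δ^k_i δ_{ab} ε_a - ε_i (δ_{ak} δ_{bi} + δ_{ai} δ_{bk}))`
and `Div X_i = -2 n ε_i x^i`, which turns the right-hand side into `-p_i T + 2 (E + nλ) ∂_{p^i}`.
-/

theorem MvPolynomial.pderiv_comm {R σ : Type*} [CommRing R] (i j : σ) (p : MvPolynomial σ R) :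
    pderiv i (pderiv j p) = pderiv j (pderiv i p) := by
  classical
  have h : ⁅pderiv i, pderiv j⁆ = (0 : Derivation R (MvPolynomial σ R) (MvPolynomial σ R)) :=
    derivation_ext fun k => by
      rw [Derivation.commutator_apply]
      simp [pderiv_X, Pi.single_apply, apply_ite]
  have hp := congr($h p)
  rw [Derivation.commutator_apply] at hp
  simpa [sub_eq_zero] using hp

open Finsupp in
theorem mul_prod_descFactorial_tsub_single {ι : Type*} [Fintype ι] [DecidableEq ι]
    (b c : ι →₀ ℕ) (j : ι) :
    c j * ∏ i, ((c - single j 1 : ι →₀ ℕ) i).descFactorial (b i)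
      = ∏ i, (c i).descFactorial ((b + single j 1 : ι →₀ ℕ) i) := by
  rw [Fintype.prod_eq_mul_prod_compl j, Fintype.prod_eq_mul_prod_compl j, ← mul_assoc]
  congr 1
  · rcases hcj : c j with _ | m
    · simp [hcj]
    · rw [tsub_apply, Finsupp.add_apply, single_eq_same, hcj, Nat.add_sub_cancel,
        Nat.succ_descFactorial_succ]
  · refine Finset.prod_congr rfl fun i hi => ?_
    have hji : j ≠ i := fun h => by simp [h] at hi
    simp [hji]

section NormalOrdering

variable {n : ℕ}

def derivMultiₗ (n : ℕ) (b : Fin n →₀ ℕ) : Module.End ℝ (PolyDen n) :=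
  (basisMonomials (Fin n) ℝ).constr ℝ
    fun c => (∏ i, (Nat.descFactorial (c i) (b i) : ℝ)) • monomial (c - b) 1

theorem coe_derivMultiₗ (b : Fin n →₀ ℕ) : ⇑(derivMultiₗ n b) = derivMulti n b := by
  ext1 f
  simp only [derivMultiₗ, Module.Basis.constr_apply, Finsupp.sum, derivMulti, mul_smul]
  rfl

theorem derivMultiₗ_monomial (b c : Fin n →₀ ℕ) :
    derivMultiₗ n b (monomial c 1)
      = (∏ i, (Nat.descFactorial (c i) (b i) : ℝ)) • monomial (c - b) 1 :=
  (basisMonomials (Fin n) ℝ).constr_basis ℝ _ c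

theorem derivMultiₗ_zero : derivMultiₗ n 0 = LinearMap.id :=
  (basisMonomials (Fin n) ℝ).ext fun c => by simp [derivMultiₗ_monomial]

theorem derivMultiₗ_add_single (b : Fin n →₀ ℕ) (j : Fin n) :
    derivMultiₗ n (b + Finsupp.single j 1) = derivMultiₗ n b ∘ₗ (pderiv j).toLinearMap :=
  (basisMonomials (Fin n) ℝ).ext fun c => by
    have hc : monomial (c - Finsupp.single j 1) (c j : ℝ)
        = (c j : ℝ) • monomial (c - Finsupp.single j 1) 1 := by
      rw [smul_monomial, smul_eq_mul, mul_one]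
    rw [coe_basisMonomials, LinearMap.comp_apply, Derivation.coeFn_coe, pderiv_monomial, one_mul,
      hc, map_smul, derivMultiₗ_monomial, derivMultiₗ_monomial, smul_smul,
      tsub_add_eq_tsub_tsub, tsub_right_comm]
    congr 1
    exact_mod_cast (mul_prod_descFactorial_tsub_single b c j).symm

open Finsupp in
theorem xExp_single_inl_add (j : Fin n) (m : Fin n ⊕ Fin n →₀ ℕ) :
    xExp n (single (Sum.inl j) 1 + m) = single j 1 + xExp n m := by
  ext; simp [xExp, single_apply]

open Finsupp in
theorem pExp_single_inl_add (j : Fin n) (m : Fin n ⊕ Fin n →₀ ℕ) :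
    pExp n (single (Sum.inl j) 1 + m) = pExp n m := by
  ext; simp [pExp]

open Finsupp in
theorem xExp_single_inr_add (j : Fin n) (m : Fin n ⊕ Fin n →₀ ℕ) :
    xExp n (single (Sum.inr j) 1 + m) = xExp n m := by
  ext; simp [xExp]

open Finsupp in
theorem pExp_single_inr_add (j : Fin n) (m : Fin n ⊕ Fin n →₀ ℕ) :
    pExp n (single (Sum.inr j) 1 + m) = single j 1 + pExp n m := by
  ext; simp [pExp, single_apply]

def Nordₗ (n : ℕ) : PolySym n →ₗ[ℝ] Module.End ℝ (PolyDen n) :=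
  (basisMonomials _ ℝ).constr ℝ
    fun m => LinearMap.mulLeft ℝ (monomial (xExp n m) 1) ∘ₗ derivMultiₗ n (pExp n m)

theorem Nordₗ_apply (P : PolySym n) (f : PolyDen n) : Nordₗ n P f = Nord n P f := by
  simp only [Nordₗ, Module.Basis.constr_apply, Finsupp.sum, LinearMap.sum_apply,
    LinearMap.smul_apply, LinearMap.coe_comp, coe_derivMultiₗ, Function.comp_apply,
    LinearMap.mulLeft_apply, Nord]
  rfl

theorem Nordₗ_monomial_one (m : Fin n ⊕ Fin n →₀ ℕ) :
    Nordₗ n (monomial m 1)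
      = LinearMap.mulLeft ℝ (monomial (xExp n m) 1) ∘ₗ derivMultiₗ n (pExp n m) :=
  (basisMonomials _ ℝ).constr_basis ℝ _ m

theorem Nordₗ_monomial (m : Fin n ⊕ Fin n →₀ ℕ) (r : ℝ) (f : PolyDen n) :
    Nordₗ n (monomial m r) f = r • (monomial (xExp n m) 1 * derivMultiₗ n (pExp n m) f) := by
  have hm : monomial m r = r • monomial m 1 := by rw [smul_monomial, smul_eq_mul, mul_one]
  rw [hm, map_smul, LinearMap.smul_apply, Nordₗ_monomial_one]
  rfl

theorem Nordₗ_C (r : ℝ) (f : PolyDen n) : Nordₗ n (C r) f = r • f := by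
  rw [C_apply, Nordₗ_monomial]
  simp [pExp, xExp, derivMultiₗ_zero]

theorem Nordₗ_xVar_mul (j : Fin n) (P : PolySym n) (f : PolyDen n) :
    Nordₗ n (xVar n j * P) f = X j * Nordₗ n P f := by
  induction P using MvPolynomial.induction_on' with
  | monomial m r =>
    rw [xVar, ← pow_one (X _), ← monomial_single_add, Nordₗ_monomial, Nordₗ_monomial,
      xExp_single_inl_add, pExp_single_inl_add, monomial_single_add, pow_one, mul_smul_comm,
      mul_assoc]
  | add P Q hP hQ => simp only [mul_add, map_add, LinearMap.add_apply, hP, hQ]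

theorem Nordₗ_pVar_mul (j : Fin n) (P : PolySym n) (f : PolyDen n) :
    Nordₗ n (pVar n j * P) f = Nordₗ n P (pderiv j f) := by
  induction P using MvPolynomial.induction_on' with
  | monomial m r =>
    rw [pVar, ← pow_one (X _), ← monomial_single_add, Nordₗ_monomial, Nordₗ_monomial,
      xExp_single_inr_add, pExp_single_inr_add, add_comm, derivMultiₗ_add_single]
    rfl
  | add P Q hP hQ => simp only [mul_add, map_add, LinearMap.add_apply, hP, hQ]

theorem Nordₗ_liftX_mul (g : PolyDen n) (P : PolySym n) (f : PolyDen n) :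
    Nordₗ n (liftX n g * P) f = g * Nordₗ n P f := by
  induction g using MvPolynomial.induction_on generalizing P with
  | C r => rw [liftX, rename_C, C_mul', map_smul, LinearMap.smul_apply, C_mul']
  | add g h hg hh =>
    simp only [liftX, map_add, add_mul, LinearMap.add_apply] at hg hh ⊢
    rw [hg, hh]
  | mul_X g j hg =>
    have hgX : liftX n (g * X j) = xVar n j * liftX n g := by simp [liftX, xVar, mul_comm]
    rw [hgX, mul_assoc, Nordₗ_xVar_mul, hg]
    ring

theorem liftX_X (j : Fin n) : liftX n (X j) = xVar n j := rename_X _ _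

theorem pderiv_inl_liftX (j : Fin n) (g : PolyDen n) :
    pderiv (Sum.inl j) (liftX n g) = liftX n (pderiv j g) :=
  pderiv_rename Sum.inl_injective _ _

theorem pderiv_Nordₗ (j : Fin n) (P : PolySym n) (f : PolyDen n) :
    pderiv j (Nordₗ n P f) = Nordₗ n (pderiv (Sum.inl j) P) f + Nordₗ n P (pderiv j f) := by
  induction P using MvPolynomial.induction_on generalizing f with
  | C r => simp [Nordₗ_C]
  | add P Q hP hQ =>
    simp only [map_add, LinearMap.add_apply, hP, hQ]
    abel
  | mul_X P k hP =>
    rcases k with k | k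
    · rw [mul_comm, ← xVar, Nordₗ_xVar_mul, Nordₗ_xVar_mul, pderiv_mul, hP, pderiv_mul, map_add,
        LinearMap.add_apply, Nordₗ_xVar_mul, ← liftX_X, pderiv_inl_liftX, Nordₗ_liftX_mul]
      ring
    · rw [mul_comm, ← pVar, Nordₗ_pVar_mul, Nordₗ_pVar_mul, hP, pVar, pderiv_mul,
        pderiv_X_of_ne Sum.inr_ne_inl, zero_mul, zero_add, ← pVar, Nordₗ_pVar_mul, pderiv_comm]

theorem pderiv_inr_xVar_mul (a k : Fin n) (P : PolySym n) :
    pderiv (Sum.inr a) (xVar n k * P) = xVar n k * pderiv (Sum.inr a) P := by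
  rw [pderiv_mul, xVar, pderiv_X_of_ne Sum.inl_ne_inr, zero_mul, zero_add]

theorem pderiv_inr_pVar_mul (a k : Fin n) (P : PolySym n) :
    pderiv (Sum.inr a) (pVar n k * P) = pVar n k * pderiv (Sum.inr a) P + if k = a then P else 0 := by
  classical
  simp [pVar, pderiv_X, Pi.single_apply, add_comm]

theorem Nordₗ_pderiv_inr_pVar_mul (a k : Fin n) (P : PolySym n) (f : PolyDen n) :
    Nordₗ n (pderiv (Sum.inr a) (pVar n k * P)) f
      = Nordₗ n (pderiv (Sum.inr a) P) (pderiv k f) + if k = a then Nordₗ n P f else 0 := by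
  rw [pderiv_inr_pVar_mul, map_add, LinearMap.add_apply, Nordₗ_pVar_mul]
  split_ifs <;> simp

theorem Nordₗ_pderiv_inr_pderiv_inr_pVar_mul (a b k : Fin n) (P : PolySym n) (f : PolyDen n) :
    Nordₗ n (pderiv (Sum.inr a) (pderiv (Sum.inr b) (pVar n k * P))) f
      = Nordₗ n (pderiv (Sum.inr a) (pderiv (Sum.inr b) P)) (pderiv k f)
        + (if k = a then Nordₗ n (pderiv (Sum.inr b) P) f else 0)
        + if k = b then Nordₗ n (pderiv (Sum.inr a) P) f else 0 := by
  rw [pderiv_inr_pVar_mul, map_add, map_add, LinearMap.add_apply, Nordₗ_pderiv_inr_pVar_mul]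
  split_ifs <;> simp

-- Induction on `P`: a factor `p_k` turns into `∂_k`, which hits `g f` by the Leibniz rule.
theorem Nordₗ_apply_mul (P : PolySym n) (g : PolyDen n)
    (hg : ∀ a b c, pderiv a (pderiv b (pderiv c g)) = 0) (f : PolyDen n) :
    Nordₗ n P (g * f)
      = g * Nordₗ n P f + ∑ a, pderiv a g * Nordₗ n (pderiv (Sum.inr a) P) f
        + (1 / 2 : ℝ) • ∑ a, ∑ b, pderiv a (pderiv b g)
            * Nordₗ n (pderiv (Sum.inr a) (pderiv (Sum.inr b) P)) f := by
  induction P using MvPolynomial.induction_on generalizing g f with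
  | C r => simp [Nordₗ_C]
  | add P Q hP hQ =>
    simp only [map_add, LinearMap.add_apply, hP g hg, hQ g hg, mul_add, Finset.sum_add_distrib,
      smul_add]
    abel
  | mul_X P k hP =>
    rcases k with k | k
    · rw [mul_comm, ← xVar]
      simp only [Nordₗ_xVar_mul, pderiv_inr_xVar_mul, hP g hg, mul_add, Finset.mul_sum,
        mul_smul_comm]
      ring_nf
    · have hg' : ∀ a b c, pderiv a (pderiv b (pderiv c (pderiv k g))) = 0 := fun a b c => by
        rw [hg b c k, map_zero]
      rw [mul_comm, ← pVar, Nordₗ_pVar_mul, pderiv_mul, map_add, hP _ hg', hP _ hg]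
      simp only [hg, zero_mul, Finset.sum_const_zero, smul_zero, add_zero, Nordₗ_pVar_mul,
        Nordₗ_pderiv_inr_pVar_mul, Nordₗ_pderiv_inr_pderiv_inr_pVar_mul, mul_add, mul_ite,
        mul_zero, Finset.sum_add_distrib, Finset.sum_ite_irrel, Finset.sum_const_zero,
        Finset.sum_ite_eq, Finset.mem_univ, if_true, smul_add]
      simp_rw [pderiv_comm k]
      module

theorem ellOp_apply (lam : ℝ) (Xf : PolyVF n) (g : PolyDen n) :
    ellOp n lam Xf g = ∑ k, Xf k * pderiv k g + lam • (divVF n Xf * g) := by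
  simp [ellOp]

theorem Lop_apply (δ : ℝ) (Xf : PolyVF n) (P : PolySym n) :
    Lop n δ Xf P = ∑ k, liftX n (Xf k) * pderiv (Sum.inl k) P
      - ∑ k, ∑ a, liftX n (pderiv a (Xf k)) * (pVar n k * pderiv (Sum.inr a) P)
      + δ • (liftX n (divVF n Xf) * P) := by
  simp only [Lop, mulOp, dxOp, dpOp, LinearMap.add_apply, LinearMap.sub_apply,
    LinearMap.sum_apply, LinearMap.smul_apply, LinearMap.comp_apply, LinearMap.mulLeft_apply,
    Derivation.coeFn_coe]
  rw [Finset.sum_comm (γ := Fin n)]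
  simp only [mul_left_comm (pVar n _), mul_assoc]

def adjointCorrection (n : ℕ) (lam : ℝ) (Xf : PolyVF n) (P : PolySym n) : PolySym n :=
  -((1 / 2 : ℝ) • ∑ k, ∑ a, ∑ b, liftX n (pderiv a (pderiv b (Xf k)))
      * (pVar n k * pderiv (Sum.inr a) (pderiv (Sum.inr b) P)))
    - lam • ∑ a, liftX n (pderiv a (divVF n Xf)) * pderiv (Sum.inr a) P

theorem ellOp_Nordₗ_sub_Nordₗ_ellOp (Xf : PolyVF n)
    (hX : ∀ k a b c, pderiv a (pderiv b (pderiv c (Xf k))) = 0) (lam δ : ℝ) (P : PolySym n)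
    (f : PolyDen n) :
    ellOp n (lam + δ) Xf (Nordₗ n P f) - Nordₗ n P (ellOp n lam Xf f)
      = Nordₗ n (Lop n δ Xf P + adjointCorrection n lam Xf P) f := by
  have hdiv : ∀ a b, pderiv a (pderiv b (divVF n Xf)) = 0 := fun a b => by
    simp only [divVF, map_sum, hX, Finset.sum_const_zero]
  have hdiv' : ∀ a b c, pderiv a (pderiv b (pderiv c (divVF n Xf))) = 0 := fun a b c => by
    rw [hdiv b c, map_zero]
  rw [ellOp_apply, ellOp_apply, Lop_apply, adjointCorrection]
  simp only [map_add, map_sum, map_smul, pderiv_Nordₗ, Nordₗ_apply_mul _ _ (hX _),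
    Nordₗ_apply_mul _ _ hdiv', hdiv, zero_mul, Finset.sum_const_zero, smul_zero, add_zero,
    map_sub, map_neg, LinearMap.add_apply, LinearMap.sub_apply, LinearMap.neg_apply,
    LinearMap.sum_apply, LinearMap.smul_apply, Nordₗ_liftX_mul, Nordₗ_pVar_mul]
  simp only [mul_add, smul_add, Finset.sum_add_distrib, Finset.smul_sum]
  module

end NormalOrdering

section ConformalInversion

variable {n : ℕ} (ε : Fin n → ℝ) (i : Fin n)

theorem pderiv_pderiv_invVF (a b k : Fin n) :
    pderiv a (pderiv b (invVF n ε i k))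
      = C (2 * ((if k = i ∧ a = b then ε a else 0)
          - ε i * ((if a = k ∧ b = i then 1 else 0) + if a = i ∧ b = k then 1 else 0))) := by
  classical
  simp only [invVF, map_sub, apply_ite (pderiv _), map_zero, map_sum, Derivation.map_smul,
    Derivation.leibniz, pderiv_X, Pi.single_apply, smul_eq_mul, map_add, mul_zero, mul_ite,
    mul_one, ite_and, Finset.sum_ite_eq', Finset.mem_univ, if_true, smul_ite, smul_zero, smul_add, Finset.sum_add_distrib]
  split_ifs <;> subst_vars <;>
    simp_all [smul_eq_C_mul, show (C 2 : PolyDen n) = 2 from map_ofNat C 2] <;> ring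

theorem pderiv_divVF_invVF (a : Fin n) :
    pderiv a (divVF n (invVF n ε i)) = C (if a = i then -(2 * n * ε i) else 0) := by
  classical
  simp only [divVF, map_sum]
  rw [Finset.sum_congr rfl fun k _ => pderiv_pderiv_invVF ε i a k k, ← map_sum]
  congr 1
  simp only [ite_and, mul_sub, mul_add, mul_ite, mul_one, mul_zero, if_true,
    Finset.sum_sub_distrib, Finset.sum_add_distrib, Finset.sum_ite_eq, Finset.sum_ite_eq',
    Finset.mem_univ, Finset.sum_const, Finset.card_univ, Fintype.card_fin, nsmul_eq_mul]
  split_ifs with h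
  · subst h
    ring
  · ring

theorem adjointCorrection_invVF (lam : ℝ) (P : PolySym n) :
    adjointCorrection n lam (invVF n ε i) P
      = -(pVar n i * traceOp n ε P)
        + (2 : ℝ) • (eulerOp n (ε i • dpOp n i P) + ((n : ℝ) * lam) • (ε i • dpOp n i P)) := by
  classical
  simp only [adjointCorrection, pderiv_pderiv_invVF, pderiv_divVF_invVF, liftX, rename_C, C_mul',
    traceOp, eulerOp, dpOp, mulOp, LinearMap.sum_apply, LinearMap.smul_apply,
    LinearMap.comp_apply, LinearMap.mulLeft_apply, Derivation.coeFn_coe, LinearMap.map_smul]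
  simp only [mul_sub, mul_add, sub_smul, add_smul, mul_ite, mul_zero, ite_smul, zero_smul,
    ite_and, Finset.sum_sub_distrib, Finset.sum_add_distrib, Finset.sum_ite_eq,
    Finset.sum_ite_eq', Finset.mem_univ, if_true, Finset.sum_const_zero, Finset.sum_ite_irrel,
    Finset.mul_sum, mul_smul_comm]
  simp_rw [pderiv_comm (Sum.inr i), mul_one, mul_smul, ← Finset.smul_sum]
  module

end ConformalInversion

theorem conformal_adjoint_minus_symbol_action_general (n : ℕ) (ε : Fin n → ℝ)
    (i : Fin n) (lam δ : ℝ) (P : PolySym n) (f : PolyDen n) :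
    Nord n (Lop n δ (invVF n ε i) P
        + (-(pVar n i * traceOp n ε P)
          + (2 : ℝ) • (eulerOp n (ε i • dpOp n i P) + ((n : ℝ) * lam) • (ε i • dpOp n i P)))) f
      = ellOp n (lam + δ) (invVF n ε i) (Nord n P f)
        - Nord n P (ellOp n lam (invVF n ε i) f) := by
  have hX : ∀ k a b c, pderiv a (pderiv b (pderiv c (invVF n ε i k))) = 0 := fun k a b c => by
    rw [pderiv_pderiv_invVF, pderiv_C]
  rw [← adjointCorrection_invVF, ← Nordₗ_apply, ← ellOp_Nordₗ_sub_Nordₗ_ellOp _ hX,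
    Nordₗ_apply, Nordₗ_apply]

/-- For the conformal inversion `X_i = x_jx^j∂_i - 2x_ix^j∂_j`, the
difference between the adjoint action `𝓛^{λ,μ}_{X_i}` on differential operators (pulled back
by normal ordering) and the symbol action `L^δ_{X_i}` equals `-p_i T + 2(E + nλ)∂_{p^i}`,
where `∂_{p^i} = η_{ij}∂_{p_j}` and `δ = μ - λ`: for every symbol `P` and function `f`,
`N(L^δ_{X_i} P + (-p_i T + 2(E + nλ)∂_{p^i}) P) f = ℓ^μ_{X_i}(N P f) - N P (ℓ^λ_{X_i} f)`. -/
theorem conformal_adjoint_minus_symbol_action (n : ℕ) (ε : Fin n → ℝ) (hε : ∀ i, ε i = 1 ∨ ε i = -1)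
    (i : Fin n) (lam δ : ℝ) (P : PolySym n) (f : PolyDen n) :
    Nord n (Lop n δ (invVF n ε i) P
        + (-(pVar n i * traceOp n ε P)
          + (2 : ℝ) • (eulerOp n (ε i • dpOp n i P) + ((n : ℝ) * lam) • (ε i • dpOp n i P)))) f
      = ellOp n (lam + δ) (invVF n ε i) (Nord n P f)
        - Nord n P (ellOp n lam (invVF n ε i) f) :=
  conformal_adjoint_minus_symbol_action_general n ε i lam δ P f
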